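/- arXiv:1801.01856 — 3 statements merged into one kernel-verified Lean document; each statement's English description precedes it below -/
import Mathlib

section
/- If S, I are nonnegative differentiable solutions of the epidemic system with 1 ≤ p ≤ q + 1, then ∫₀^∞ τ I(t)^p/(1 + κ I(t)^q) dt ≤ τ · max(1, 1/κ) · (S(0) + I(0))/λ < ∞. -/
/-!
Adding the two equations, `(S + I)' = -λ I`, so `S + I` is a nonnegative, nonincreasing
quantity and `λ ∫₀^∞ I ≤ S(0) + I(0)`. Since `1 ≤ p ≤ q + 1`, the incidence rate satisfies
`I^p / (1 + κ I^q) ≤ max 1 κ⁻¹ · I` (compare with `I` where `I ≤ 1`, with `I / κ` where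
`I ≥ 1`), and the bound follows by integrating.
-/

open MeasureTheory Set Filter

lemma rpow_div_one_add_mul_rpow_le {κ p q x : ℝ} (hκ : 0 < κ) (hp : 1 ≤ p) (hpq : p ≤ q + 1)
    (hx : 0 ≤ x) : x ^ p / (1 + κ * x ^ q) ≤ max 1 (1 / κ) * x := by
  have hxq : 0 ≤ x ^ q := Real.rpow_nonneg hx q
  rcases le_or_gt x 1 with hx1 | hx1
  · have hxp : x ^ p ≤ x := by
      simpa using Real.rpow_le_rpow_of_exponent_ge' hx hx1 zero_le_one hp
    calc x ^ p / (1 + κ * x ^ q) ≤ x ^ p :=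
          div_le_self (Real.rpow_nonneg hx p) (by nlinarith [mul_nonneg hκ.le hxq])
      _ ≤ 1 * x := by rwa [one_mul]
      _ ≤ max 1 (1 / κ) * x := by gcongr; exact le_max_left _ _
  · have hx0 : 0 < x := one_pos.trans hx1
    have hxqpos : 0 < x ^ q := Real.rpow_pos_of_pos hx0 q
    calc x ^ p / (1 + κ * x ^ q) ≤ x ^ (q + 1) / (κ * x ^ q) :=
          div_le_div₀ (by positivity) (Real.rpow_le_rpow_of_exponent_le hx1.le hpq)
            (by positivity) (by linarith)
      _ = 1 / κ * x := by rw [Real.rpow_add_one hx0.ne']; field_simp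
      _ ≤ max 1 (1 / κ) * x := by gcongr; exact le_max_right _ _

section Dissipation

variable {F g : ℝ → ℝ} {a c : ℝ}

lemma intervalIntegral_le_of_hasDerivAt_neg_mul (hc : 0 < c) (hg : ContinuousOn g (Ici a))
    (hF0 : ∀ t, a ≤ t → 0 ≤ F t) (hF : ∀ t, a ≤ t → HasDerivAt F (-(c * g t)) t)
    {T : ℝ} (hT : a ≤ T) : ∫ t in a..T, g t ≤ F a / c := by
  have hFTC : ∫ t in a..T, -(c * g t) = F T - F a :=
    intervalIntegral.integral_eq_sub_of_hasDerivAt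
      (fun t ht => hF t (by rw [uIcc_of_le hT] at ht; exact ht.1))
      (((hg.mono Icc_subset_Ici_self).const_smul c).neg.intervalIntegrable_of_Icc hT)
  rw [intervalIntegral.integral_neg, intervalIntegral.integral_const_mul] at hFTC
  rw [le_div_iff₀ hc]
  linarith [hF0 T hT]

lemma integrableOn_Ici_and_setIntegral_le_of_hasDerivAt_neg_mul (hc : 0 < c)
    (hg : ContinuousOn g (Ici a)) (hg0 : ∀ t, a ≤ t → 0 ≤ g t) (hF0 : ∀ t, a ≤ t → 0 ≤ F t)
    (hF : ∀ t, a ≤ t → HasDerivAt F (-(c * g t)) t) :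
    IntegrableOn g (Ici a) ∧ ∫ t in Ici a, g t ≤ F a / c := by
  have hbound : ∀ᶠ T in atTop, ∫ t in a..T, g t ≤ F a / c :=
    (eventually_ge_atTop a).mono fun T hT =>
      intervalIntegral_le_of_hasDerivAt_neg_mul hc hg hF0 hF hT
  have hint : IntegrableOn g (Ioi a) := by
    refine integrableOn_Ioi_of_intervalIntegral_norm_bounded (F a / c) a
      (fun T => ((hg.mono Icc_subset_Ici_self).integrableOn_Icc).mono_set Ioc_subset_Icc_self)
      tendsto_id ?_
    filter_upwards [hbound, eventually_ge_atTop a] with T hT haT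
    change ∫ t in a..T, ‖g t‖ ≤ F a / c
    rwa [intervalIntegral.integral_congr fun t ht =>
      Real.norm_of_nonneg (hg0 t (by rw [uIcc_of_le haT] at ht; exact ht.1))]
  refine ⟨(integrableOn_Ici_iff_integrableOn_Ioi).2 hint, ?_⟩
  rw [integral_Ici_eq_integral_Ioi]
  exact le_of_tendsto (intervalIntegral_tendsto_integral_Ioi a hint tendsto_id) hbound

end Dissipation

lemma integrableOn_and_setIntegral_le_of_le_const_mul {α : Type*} [MeasurableSpace α]
    {μ : Measure α} {s : Set α} {f g : α → ℝ} {C : ℝ} (hs : MeasurableSet s)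
    (hf : AEStronglyMeasurable f (μ.restrict s)) (hg : IntegrableOn g s μ)
    (hf0 : ∀ t ∈ s, 0 ≤ f t) (hfg : ∀ t ∈ s, f t ≤ C * g t) :
    IntegrableOn f s μ ∧ ∫ t in s, f t ∂μ ≤ C * ∫ t in s, g t ∂μ := by
  have hf_int : IntegrableOn f s μ :=
    (hg.const_mul C).mono' hf <| (ae_restrict_mem hs).mono fun t ht => by
      rw [Real.norm_of_nonneg (hf0 t ht)]; exact hfg t ht
  refine ⟨hf_int, ?_⟩
  rw [← integral_const_mul]
  exact setIntegral_mono_on hf_int (hg.const_mul C) hs hfg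

theorem stmt5_general (τ κ lam p q : ℝ) (hτ : 0 < τ) (hκ : 0 < κ) (hlam : 0 < lam)
    (hp1 : 1 ≤ p) (hpq : p ≤ q + 1) (S I : ℝ → ℝ)
    (hSpos : ∀ t, 0 ≤ t → 0 ≤ S t) (hIpos : ∀ t, 0 ≤ t → 0 ≤ I t)
    (hS : ∀ t, 0 ≤ t → HasDerivAt S (-(τ * I t ^ p * S t / (1 + κ * I t ^ q))) t)
    (hI : ∀ t, 0 ≤ t → HasDerivAt I (τ * I t ^ p * S t / (1 + κ * I t ^ q) - lam * I t) t) :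
    MeasureTheory.IntegrableOn (fun t => τ * I t ^ p / (1 + κ * I t ^ q)) (Set.Ici 0) ∧
      ∫ t in Set.Ici (0:ℝ), τ * I t ^ p / (1 + κ * I t ^ q)
        ≤ τ * max 1 (1 / κ) * (S 0 + I 0) / lam := by
  have hIcont : ContinuousOn I (Ici 0) := fun t ht => (hI t ht).continuousAt.continuousWithinAt
  obtain ⟨hIint, hIle⟩ := integrableOn_Ici_and_setIntegral_le_of_hasDerivAt_neg_mul (F := S + I)
    hlam hIcont hIpos (fun t ht => add_nonneg (hSpos t ht) (hIpos t ht))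
    (fun t ht => ((hS t ht).add (hI t ht)).congr_deriv (by ring))
  have hmeas : AEStronglyMeasurable (fun t => τ * I t ^ p / (1 + κ * I t ^ q))
      (volume.restrict (Ici 0)) :=
    ((by fun_prop : Measurable fun x : ℝ => τ * x ^ p / (1 + κ * x ^ q)).comp_aemeasurable
      (hIcont.aemeasurable measurableSet_Ici)).aestronglyMeasurable
  have hnonneg : ∀ t ∈ Ici (0 : ℝ), 0 ≤ τ * I t ^ p / (1 + κ * I t ^ q) := fun t ht => by
    have := Real.rpow_nonneg (hIpos t ht) q
    have := Real.rpow_nonneg (hIpos t ht) p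
    positivity
  have hbound : ∀ t ∈ Ici (0 : ℝ),
      τ * I t ^ p / (1 + κ * I t ^ q) ≤ τ * max 1 (1 / κ) * I t := fun t ht => by
    rw [mul_div_assoc, mul_assoc]
    exact mul_le_mul_of_nonneg_left
      (rpow_div_one_add_mul_rpow_le hκ hp1 hpq (hIpos t ht)) hτ.le
  obtain ⟨hint, hle⟩ := integrableOn_and_setIntegral_le_of_le_const_mul measurableSet_Ici
    hmeas hIint hnonneg hbound
  refine ⟨hint, hle.trans ?_⟩
  rw [mul_div_assoc]
  exact mul_le_mul_of_nonneg_left hIle (by positivity)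

theorem stmt5 (τ κ lam p q : ℝ) (hτ : 0 < τ) (hκ : 0 < κ) (hlam : 0 < lam)
    (hp : 0 < p) (hq : 0 < q) (hp1 : 1 ≤ p) (hpq : p ≤ q + 1) (S I : ℝ → ℝ)
    (hSpos : ∀ t, 0 ≤ t → 0 ≤ S t) (hIpos : ∀ t, 0 ≤ t → 0 ≤ I t)
    (hS : ∀ t, 0 ≤ t → HasDerivAt S (-(τ * I t ^ p * S t / (1 + κ * I t ^ q))) t)
    (hI : ∀ t, 0 ≤ t → HasDerivAt I (τ * I t ^ p * S t / (1 + κ * I t ^ q) - lam * I t) t)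
    (hcont : Continuous I) :
    MeasureTheory.IntegrableOn (fun t => τ * I t ^ p / (1 + κ * I t ^ q)) (Set.Ici 0) ∧
      ∫ t in Set.Ici (0:ℝ), τ * I t ^ p / (1 + κ * I t ^ q)
        ≤ τ * max 1 (1 / κ) * (S 0 + I 0) / lam :=
  stmt5_general τ κ lam p q hτ hκ hlam hp1 hpq S I hSpos hIpos hS hI
end

section
/- If S, I are nonnegative differentiable solutions of the epidemic system with S(0) > 0 and 1 ≤ p ≤ q + 1, then S(t) converges as t → ∞ to a strictly positive limit S∞ = S(0) · exp(-∫₀^∞ τ I(t)^p/(1+κ I(t)^q) dt) > 0. -/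
/-!
Writing `F t = ∫₀ᵗ τ I^p / (1 + κ I^q)`, the first equation is the linear equation `S' = -F' S`,
so `S t = S 0 · exp (-F t)`, and it remains to see that `F` has a finite limit. Adding the two
equations, `(S + I)' = -λ I`, so `S + I ≤ S 0 + I 0` and `λ ∫₀^∞ I ≤ S 0 + I 0`. Since `p ≥ 1`, the
incidence is at most `τ I^p ≤ τ (S 0 + I 0)^(p - 1) I`, hence integrable on `[0, ∞)`.
-/

open MeasureTheory Filter Set Topology

theorem eq_mul_exp_neg_integral_of_hasDerivAt {g y : ℝ → ℝ} {a t : ℝ} (hg : Measurable g)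
    (hgc : ∀ s, a ≤ s → ContinuousAt g s) (hy : ∀ s, a ≤ s → HasDerivAt y (-(g s * y s)) s)
    (ht : a ≤ t) : y t = y a * Real.exp (-∫ s in a..t, g s) := by
  have hG : ∀ s, a ≤ s → HasDerivAt (fun u => ∫ r in a..u, g r) (g s) s := fun s hs =>
    intervalIntegral.integral_hasDerivAt_right
      (ContinuousOn.intervalIntegrable fun r hr =>
        (hgc r (uIcc_of_le hs ▸ hr).1).continuousWithinAt)
      hg.stronglyMeasurable.stronglyMeasurableAtFilter (hgc s hs)
  have hconst : ∫ _ in a..t, (0 : ℝ) =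
      y t * Real.exp (∫ r in a..t, g r) - y a * Real.exp (∫ r in a..a, g r) := by
    refine intervalIntegral.integral_eq_sub_of_hasDerivAt
      (f := fun u => y u * Real.exp (∫ r in a..u, g r)) (fun s hs => ?_) intervalIntegrable_const
    rw [uIcc_of_le ht] at hs
    exact ((hy s hs.1).mul (hG s hs.1).exp).congr_deriv (by ring)
  rw [intervalIntegral.integral_zero, intervalIntegral.integral_same, Real.exp_zero, mul_one,
    eq_comm, sub_eq_zero] at hconst
  rw [Real.exp_neg, ← hconst, mul_inv_cancel_right₀ (Real.exp_ne_zero _)]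

theorem Real.rpow_le_rpow_sub_one_mul {x N p : ℝ} (hx : 0 ≤ x) (hxN : x ≤ N) (hp : 1 ≤ p) :
    x ^ p ≤ N ^ (p - 1) * x := by
  calc x ^ p = x ^ (p - 1) * x := by
        rw [← Real.rpow_add_one' hx (by linarith), sub_add_cancel]
    _ ≤ N ^ (p - 1) * x := by gcongr

noncomputable def incidence (τ κ p q x : ℝ) : ℝ := τ * x ^ p / (1 + κ * x ^ q)

section incidence

variable {τ κ p q x : ℝ}

theorem one_le_one_add_mul_rpow (hκ : 0 ≤ κ) (hx : 0 ≤ x) : 1 ≤ 1 + κ * x ^ q :=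
  le_add_of_nonneg_right (mul_nonneg hκ (Real.rpow_nonneg hx q))

theorem incidence_nonneg (hτ : 0 ≤ τ) (hκ : 0 ≤ κ) (hx : 0 ≤ x) : 0 ≤ incidence τ κ p q x :=
  div_nonneg (mul_nonneg hτ (Real.rpow_nonneg hx p))
    (zero_le_one.trans (one_le_one_add_mul_rpow hκ hx))

theorem incidence_le_mul {N : ℝ} (hτ : 0 ≤ τ) (hκ : 0 ≤ κ) (hp : 1 ≤ p) (hx : 0 ≤ x)
    (hxN : x ≤ N) : incidence τ κ p q x ≤ τ * N ^ (p - 1) * x :=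
  calc incidence τ κ p q x ≤ τ * x ^ p :=
        div_le_self (mul_nonneg hτ (Real.rpow_nonneg hx p)) (one_le_one_add_mul_rpow hκ hx)
    _ ≤ τ * (N ^ (p - 1) * x) := by gcongr; exact Real.rpow_le_rpow_sub_one_mul hx hxN hp
    _ = τ * N ^ (p - 1) * x := (mul_assoc _ _ _).symm

theorem measurable_incidence : Measurable (incidence τ κ p q) := by
  unfold incidence
  fun_prop

theorem continuousAt_incidence (hp : 0 ≤ p) (hq : 0 ≤ q) (hκ : 0 ≤ κ) (hx : 0 ≤ x) :
    ContinuousAt (incidence τ κ p q) x :=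
  (continuousAt_const.mul (Real.continuousAt_rpow_const x p (Or.inr hp))).div
    (continuousAt_const.add
      (continuousAt_const.mul (Real.continuousAt_rpow_const x q (Or.inr hq))))
    (zero_lt_one.trans_le (one_le_one_add_mul_rpow hκ hx)).ne'

theorem MeasureTheory.IntegrableOn.incidence_comp {I : ℝ → ℝ} {s : Set ℝ} {N : ℝ}
    (hI : IntegrableOn I s) (hmeas : Measurable I) (hs : MeasurableSet s) (hτ : 0 ≤ τ)
    (hκ : 0 ≤ κ) (hp : 1 ≤ p) (hI0 : ∀ t ∈ s, 0 ≤ I t) (hIN : ∀ t ∈ s, I t ≤ N) :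
    IntegrableOn (fun t => incidence τ κ p q (I t)) s := by
  refine (hI.const_mul (τ * N ^ (p - 1))).mono'
    (measurable_incidence.comp hmeas).aestronglyMeasurable ?_
  refine (ae_restrict_iff' hs).2 (ae_of_all _ fun t ht => ?_)
  rw [Real.norm_of_nonneg (incidence_nonneg hτ hκ (hI0 t ht))]
  exact incidence_le_mul hτ hκ hp (hI0 t ht) (hIN t ht)

end incidence

section conservation

variable {S I r : ℝ → ℝ} {lam : ℝ}

theorem add_add_integral_eq_of_hasDerivAt (hS : ∀ t, 0 ≤ t → HasDerivAt S (-r t) t)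
    (hI : ∀ t, 0 ≤ t → HasDerivAt I (r t - lam * I t) t) (hcont : Continuous I) {T : ℝ}
    (hT : 0 ≤ T) : S T + I T + ∫ t in 0..T, lam * I t = S 0 + I 0 := by
  have hV : ∫ t in 0..T, -(lam * I t) = (S T + I T) - (S 0 + I 0) := by
    refine intervalIntegral.integral_eq_sub_of_hasDerivAt (f := fun u => S u + I u)
      (fun t ht => ?_) ((continuous_const.mul hcont).neg.intervalIntegrable 0 T)
    rw [uIcc_of_le hT] at ht
    exact ((hS t ht.1).add (hI t ht.1)).congr_deriv (by ring)
  rw [intervalIntegral.integral_neg] at hV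
  linarith

theorem le_of_add_add_integral_eq
    (hcons : ∀ T, 0 ≤ T → S T + I T + ∫ t in 0..T, lam * I t = S 0 + I 0) (hlam : 0 ≤ lam)
    (hSpos : ∀ t, 0 ≤ t → 0 ≤ S t) (hIpos : ∀ t, 0 ≤ t → 0 ≤ I t) {T : ℝ} (hT : 0 ≤ T) :
    I T ≤ S 0 + I 0 := by
  have hint : 0 ≤ ∫ t in 0..T, lam * I t :=
    intervalIntegral.integral_nonneg hT fun t ht => mul_nonneg hlam (hIpos t ht.1)
  linarith [hcons T hT, hSpos T hT]

theorem integrableOn_Ioi_of_add_add_integral_eq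
    (hcons : ∀ T, 0 ≤ T → S T + I T + ∫ t in 0..T, lam * I t = S 0 + I 0) (hlam : 0 < lam)
    (hSpos : ∀ t, 0 ≤ t → 0 ≤ S t) (hIpos : ∀ t, 0 ≤ t → 0 ≤ I t) (hcont : Continuous I) :
    IntegrableOn I (Ioi 0) := by
  refine integrableOn_Ioi_of_intervalIntegral_norm_bounded ((S 0 + I 0) / lam) 0
    (fun T => hcont.integrableOn_Ioc) tendsto_id ?_
  filter_upwards [eventually_ge_atTop 0] with T hT
  have hnorm : ∫ t in 0..T, ‖I t‖ = ∫ t in 0..T, I t :=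
    intervalIntegral.integral_congr fun t ht =>
      Real.norm_of_nonneg (hIpos t (uIcc_of_le hT ▸ ht).1)
  have hcons := hcons T hT
  rw [intervalIntegral.integral_const_mul] at hcons
  rw [id, hnorm, le_div_iff₀ hlam]
  nlinarith [hSpos T hT, hIpos T hT]

end conservation

theorem stmt7_general (τ κ lam p q : ℝ) (hτ : 0 < τ) (hκ : 0 < κ) (hlam : 0 < lam)
    (hp : 0 < p) (hq : 0 < q) (hp1 : 1 ≤ p) (S I : ℝ → ℝ)
    (hS0 : 0 < S 0)
    (hSpos : ∀ t, 0 ≤ t → 0 ≤ S t) (hIpos : ∀ t, 0 ≤ t → 0 ≤ I t)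
    (hS : ∀ t, 0 ≤ t → HasDerivAt S (-(τ * I t ^ p * S t / (1 + κ * I t ^ q))) t)
    (hI : ∀ t, 0 ≤ t → HasDerivAt I (τ * I t ^ p * S t / (1 + κ * I t ^ q) - lam * I t) t)
    (hcont : Continuous I) :
    Filter.Tendsto S Filter.atTop
      (nhds (S 0 * Real.exp (-∫ t in Set.Ici (0:ℝ), τ * I t ^ p / (1 + κ * I t ^ q)))) ∧
    0 < S 0 * Real.exp (-∫ t in Set.Ici (0:ℝ), τ * I t ^ p / (1 + κ * I t ^ q)) := by
  set f : ℝ → ℝ := fun t => incidence τ κ p q (I t)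
  have hSexp : ∀ t, 0 ≤ t → S t = S 0 * Real.exp (-∫ s in 0..t, f s) := fun t ht =>
    eq_mul_exp_neg_integral_of_hasDerivAt (measurable_incidence.comp hcont.measurable)
      (fun s hs => (continuousAt_incidence hp.le hq.le hκ.le (hIpos s hs)).comp hcont.continuousAt)
      (fun s hs => (hS s hs).congr_deriv (by simp only [f, incidence]; ring)) ht
  have hcons : ∀ T, 0 ≤ T → S T + I T + ∫ t in 0..T, lam * I t = S 0 + I 0 := fun T hT =>
    add_add_integral_eq_of_hasDerivAt
      (r := fun t => τ * I t ^ p * S t / (1 + κ * I t ^ q)) hS hI hcont hT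
  have hf : IntegrableOn f (Ioi 0) :=
    (integrableOn_Ioi_of_add_add_integral_eq hcons hlam hSpos hIpos hcont).incidence_comp
      hcont.measurable measurableSet_Ioi hτ.le hκ.le hp1 (fun t ht => hIpos t ht.le)
      (fun t ht => le_of_add_add_integral_eq hcons hlam.le hSpos hIpos ht.le)
  change Tendsto S atTop (𝓝 (S 0 * Real.exp (-∫ t in Ici 0, f t))) ∧
    0 < S 0 * Real.exp (-∫ t in Ici 0, f t)
  rw [integral_Ici_eq_integral_Ioi]
  refine ⟨?_, by positivity⟩
  have hF := intervalIntegral_tendsto_integral_Ioi 0 hf tendsto_id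
  refine (hF.neg.rexp.const_mul (S 0)).congr' ?_
  filter_upwards [eventually_ge_atTop 0] with t ht using (hSexp t ht).symm

theorem stmt7 (τ κ lam p q : ℝ) (hτ : 0 < τ) (hκ : 0 < κ) (hlam : 0 < lam)
    (hp : 0 < p) (hq : 0 < q) (hp1 : 1 ≤ p) (hpq : p ≤ q + 1) (S I : ℝ → ℝ)
    (hS0 : 0 < S 0)
    (hSpos : ∀ t, 0 ≤ t → 0 ≤ S t) (hIpos : ∀ t, 0 ≤ t → 0 ≤ I t)
    (hS : ∀ t, 0 ≤ t → HasDerivAt S (-(τ * I t ^ p * S t / (1 + κ * I t ^ q))) t)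
    (hI : ∀ t, 0 ≤ t → HasDerivAt I (τ * I t ^ p * S t / (1 + κ * I t ^ q) - lam * I t) t)
    (hcont : Continuous I) :
    Filter.Tendsto S Filter.atTop
      (nhds (S 0 * Real.exp (-∫ t in Set.Ici (0:ℝ), τ * I t ^ p / (1 + κ * I t ^ q)))) ∧
    0 < S 0 * Real.exp (-∫ t in Set.Ici (0:ℝ), τ * I t ^ p / (1 + κ * I t ^ q)) :=
  stmt7_general τ κ lam p q hτ hκ hlam hp hq hp1 S I hS0 hSpos hIpos hS hI hcont
end

section
/- Suppose S, I are twice differentiable nonnegative solutions of the epidemic system with S(t̄) > 0, I(t̄) > 0, and S'(t̄) < 0 at a time t̄ where I'(t̄) = 0. Then I''(t̄) = τ I(t̄)^p S'(t̄)/(1 + κ I(t̄)^q) < 0; i.e., every interior critical point of I with positive state values is a strict local maximum. -/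
/-!
At a critical point of `I` every term of `(τ I^p S / (1 + κ I^q) - λ I)'` that carries a factor
`I'` vanishes, so `I''(t̄)` is the incidence term with `S` replaced by `S'`; its sign is that of
`S'(t̄) < 0`.
-/

theorem HasDerivAt.incidence_of_hasDerivAt_zero {I S : ℝ → ℝ} {S' t : ℝ} (τ κ p q : ℝ)
    (hI : HasDerivAt I 0 t) (hIt : I t ≠ 0) (hS : HasDerivAt S S' t)
    (hden : 1 + κ * I t ^ q ≠ 0) :
    HasDerivAt (fun t => τ * I t ^ p * S t / (1 + κ * I t ^ q))
      (τ * I t ^ p * S' / (1 + κ * I t ^ q)) t := by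
  have hnum := ((hI.rpow_const (p := p) (Or.inl hIt)).const_mul τ).mul hS
  have hD := ((hI.rpow_const (p := q) (Or.inl hIt)).const_mul κ).const_add 1
  refine (hnum.div hD hden).congr_deriv ?_
  field_simp
  ring

theorem stmt9_general (τ κ lam p q : ℝ) (hτ : 0 < τ) (hκ : 0 < κ)
    (S I S' I'' : ℝ → ℝ) (tbar : ℝ) (htbar : 0 < tbar)
    (hS : ∀ t, 0 ≤ t → HasDerivAt S (S' t) t)
    (hI : ∀ t, 0 ≤ t →
      HasDerivAt I (τ * I t ^ p * S t / (1 + κ * I t ^ q) - lam * I t) t)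
    (hI'' : HasDerivAt (fun t => τ * I t ^ p * S t / (1 + κ * I t ^ q) - lam * I t)
      (I'' tbar) tbar)
    (hItbar : 0 < I tbar)
    (hS'neg : S' tbar < 0)
    (hcrit : τ * I tbar ^ p * S tbar / (1 + κ * I tbar ^ q) - lam * I tbar = 0) :
    I'' tbar = τ * I tbar ^ p * S' tbar / (1 + κ * I tbar ^ q) ∧ I'' tbar < 0 := by
  have hI0 : HasDerivAt I 0 tbar := hcrit ▸ hI tbar htbar.le
  have hden : 0 < 1 + κ * I tbar ^ q := by positivity
  have hrhs := ((hI0.incidence_of_hasDerivAt_zero τ κ p q hItbar.ne' (hS tbar htbar.le)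
    hden.ne').sub (hI0.const_mul lam))
  rw [mul_zero, sub_zero] at hrhs
  have heq : I'' tbar = τ * I tbar ^ p * S' tbar / (1 + κ * I tbar ^ q) := hI''.unique hrhs
  refine ⟨heq, heq ▸ div_neg_of_neg_of_pos ?_ hden⟩
  exact mul_neg_of_pos_of_neg (by positivity) hS'neg

theorem stmt9 (τ κ lam p q : ℝ) (hτ : 0 < τ) (hκ : 0 < κ) (hlam : 0 < lam)
    (hp : 0 < p) (hq : 0 < q) (S I S' I'' : ℝ → ℝ) (tbar : ℝ) (htbar : 0 < tbar)
    (hSpos : ∀ t, 0 ≤ t → 0 ≤ S t) (hIpos : ∀ t, 0 ≤ t → 0 ≤ I t)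
    (hS : ∀ t, 0 ≤ t → HasDerivAt S (S' t) t)
    (hSeq : ∀ t, 0 ≤ t → S' t = -(τ * I t ^ p * S t / (1 + κ * I t ^ q)))
    (hI : ∀ t, 0 ≤ t →
      HasDerivAt I (τ * I t ^ p * S t / (1 + κ * I t ^ q) - lam * I t) t)
    (hI'' : HasDerivAt (fun t => τ * I t ^ p * S t / (1 + κ * I t ^ q) - lam * I t)
      (I'' tbar) tbar)
    (hStbar : 0 < S tbar) (hItbar : 0 < I tbar)
    (hS'neg : S' tbar < 0)
    (hcrit : τ * I tbar ^ p * S tbar / (1 + κ * I tbar ^ q) - lam * I tbar = 0) :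
    I'' tbar = τ * I tbar ^ p * S' tbar / (1 + κ * I tbar ^ q) ∧ I'' tbar < 0 :=
  stmt9_general τ κ lam p q hτ hκ S I S' I'' tbar htbar hS hI hI'' hItbar hS'neg hcrit
end
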